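/- Under the stated hypotheses, suppose both I + R_x and I − R_x are invertible for all x in an open interval J. Then the scalar function V(x) = −C(exp(−xA)·(I − R_x²)⁻¹·exp(−xA)·b) is differentiable on J and satisfies the Riccati-type equation V′(x) = 2·a(x) + 2·V(x)², where a(x) = C(exp(−xA)·(I+R_x)⁻¹·A·(I+R_x)⁻¹·exp(−xA)·b). -/

import Mathlib

open MeasureTheory

/-- The semigroup `exp(-tA)` generated by a bounded operator `A`. -/
noncomputable def expA {H : Type*} [NormedAddCommGroup H] [InnerProductSpace ℂ H]
    [CompleteSpace H] (A : H →L[ℂ] H) (t : ℝ) : H →L[ℂ] H :=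
  NormedSpace.exp ((-(t : ℂ)) • A)

/-- `R_x = ∫_x^∞ exp(-tA)·BC·exp(-tA) dt` as a Bochner integral. -/
noncomputable def Rop {H : Type*} [NormedAddCommGroup H] [InnerProductSpace ℂ H]
    [CompleteSpace H] (A : H →L[ℂ] H) (BC : H →L[ℂ] H) (x : ℝ) : H →L[ℂ] H :=
  ∫ t in Set.Ioi x, expA A t * BC * expA A t

/-!
Differentiating under the integral gives `R' = -K` with `K = e^{-xA} BC e^{-xA}`, and integrating
the derivative `-(A g + g A)` of the integrand `g` over `(x, ∞)` gives the Lyapunov identity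
`A R + R A = K`. With `S = (1 - R²)⁻¹` and `T = e^{-xA} S e^{-xA}` the product rule gives
`T' = -e^{-xA} (A S + S A + S (K R + R K) S) e^{-xA}`, and the Lyapunov identity turns the bracket
into `2 (1 + R)⁻¹ A (1 + R)⁻¹ + 2 S K S`. Since `BC` has rank one, `C (T BC T b) = C (T b)²`,
which is the term `2 V²`.
-/

open Filter Topology

section RingInverse

variable {α : Type*} [Ring α] {R : α}

theorem Ring.inverse_one_sub_mul_self_mul_one_sub (hm : IsUnit (1 - R)) :
    Ring.inverse (1 - R * R) * (1 - R) = Ring.inverse (1 + R) := by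
  rw [show 1 - R * R = (1 - R) * (1 + R) by noncomm_ring,
    Ring.mul_inverse_rev' (by noncomm_ring : (1 - R) * (1 + R) = (1 + R) * (1 - R)), mul_assoc,
    Ring.inverse_mul_cancel _ hm, mul_one]

theorem Ring.one_sub_mul_inverse_one_sub_mul_self (hm : IsUnit (1 - R)) :
    (1 - R) * Ring.inverse (1 - R * R) = Ring.inverse (1 + R) := by
  rw [show 1 - R * R = (1 + R) * (1 - R) by noncomm_ring,
    Ring.mul_inverse_rev' (by noncomm_ring : (1 + R) * (1 - R) = (1 - R) * (1 + R)), ← mul_assoc,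
    Ring.mul_inverse_cancel _ hm, one_mul]

theorem riccati_algebraic_identity {A K : α} (hK : A * R + R * A = K)
    (hp : IsUnit (1 + R)) (hm : IsUnit (1 - R)) :
    A * Ring.inverse (1 - R * R) + Ring.inverse (1 - R * R) * A
        + Ring.inverse (1 - R * R) * (K * R + R * K) * Ring.inverse (1 - R * R)
      = 2 * (Ring.inverse (1 + R) * A * Ring.inverse (1 + R))
        + 2 * (Ring.inverse (1 - R * R) * K * Ring.inverse (1 - R * R)) := by
  set S := Ring.inverse (1 - R * R)
  have hU : IsUnit (1 - R * R) := by
    rw [show 1 - R * R = (1 - R) * (1 + R) by noncomm_ring]; exact hm.mul hp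
  calc A * S + S * A + S * (K * R + R * K) * S
      = S * (1 - R * R) * A * S + S * A * ((1 - R * R) * S) + S * (K * R + R * K) * S := by
        rw [Ring.inverse_mul_cancel _ hU, Ring.mul_inverse_cancel _ hU, one_mul, mul_one]
    _ = S * ((1 - R * R) * A + A * (1 - R * R) + (K * R + R * K)) * S := by noncomm_ring
    _ = 2 * ((S * (1 - R)) * A * ((1 - R) * S)) + 2 * (S * K * S) := by rw [← hK]; noncomm_ring
    _ = _ := by
        rw [Ring.inverse_one_sub_mul_self_mul_one_sub hm, Ring.one_sub_mul_inverse_one_sub_mul_self hm]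

end RingInverse

theorem HasDerivAt.ringInverse {R : Type*} [NormedRing R] [HasSummableGeomSeries R]
    [NormedAlgebra ℝ R] {f : ℝ → R} {f' : R} {x : ℝ} (hf : HasDerivAt f f' x)
    (hx : IsUnit (f x)) :
    HasDerivAt (fun y => Ring.inverse (f y))
      (-(Ring.inverse (f x) * f' * Ring.inverse (f x))) x := by
  obtain ⟨u, hu⟩ := hx
  have hinv : HasFDerivAt Ring.inverse (-ContinuousLinearMap.mulLeftRight ℝ R
      (Ring.inverse (f x)) (Ring.inverse (f x))) (f x) := by
    rw [← hu, Ring.inverse_unit]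
    exact hasFDerivAt_ringInverse u
  exact hinv.comp_hasDerivAt x hf

theorem ContinuousLinearMap.apply_mul_smulRight_mul_apply {𝕜 E : Type*} [NontriviallyNormedField 𝕜]
    [NormedAddCommGroup E] [NormedSpace 𝕜 E] (C : E →L[𝕜] 𝕜) (b : E) (X Y : E →L[𝕜] E) :
    C ((X * C.smulRight b * Y) b) = C (Y b) * C (X b) := by
  simp [smul_eq_mul]

section ExpA

variable {H : Type*} [NormedAddCommGroup H] [InnerProductSpace ℂ H] [CompleteSpace H]
  (A : H →L[ℂ] H)

theorem commute_expA (x : ℝ) : Commute A (expA A x) :=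
  ((Commute.refl A).smul_right _).exp_right

theorem hasDerivAt_expA (x : ℝ) : HasDerivAt (expA A) (-(A * expA A x)) x := by
  have hneg : HasDerivAt (fun t : ℝ => -(t : ℂ)) (-1) x :=
    (hasDerivAt_id x).ofReal_comp.neg.congr_deriv (by simp)
  refine ((hasDerivAt_exp_smul_const' A (-(x : ℂ))).scomp x hneg).congr_deriv ?_
  simp [expA]

theorem hasDerivAt_expA' (x : ℝ) : HasDerivAt (expA A) (-(expA A x * A)) x :=
  (commute_expA A x).eq ▸ hasDerivAt_expA A x

theorem continuous_expA : Continuous (expA A) :=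
  continuous_iff_continuousAt.2 fun x => (hasDerivAt_expA A x).continuousAt

theorem HasDerivAt.expA_mul_mul_expA {F : ℝ → H →L[ℂ] H} {F' : H →L[ℂ] H} {x : ℝ}
    (hF : HasDerivAt F F' x) :
    HasDerivAt (fun y => expA A y * F y * expA A y)
      (expA A x * (F' - (A * F x + F x * A)) * expA A x) x := by
  refine (((hasDerivAt_expA' A x).mul hF).mul (hasDerivAt_expA A x)).congr_deriv ?_
  simp only [Pi.mul_apply]
  noncomm_ring

variable (BC : H →L[ℂ] H) {M ε : ℝ}

theorem continuous_expA_mul_mul_expA : Continuous fun t => expA A t * BC * expA A t :=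
  ((continuous_expA A).mul continuous_const).mul (continuous_expA A)

theorem hasDerivAt_expA_mul_mul_expA (t : ℝ) :
    HasDerivAt (fun s => expA A s * BC * expA A s)
      (-(A * (expA A t * BC * expA A t) + expA A t * BC * expA A t * A)) t :=
  (((hasDerivAt_expA A t).mul_const BC).mul (hasDerivAt_expA' A t)).congr_deriv (by noncomm_ring)

theorem norm_expA_mul_mul_expA_le (hdecay : ∀ t : ℝ, 0 ≤ t → ‖expA A t‖ ≤ M * Real.exp (-ε * t))
    {t : ℝ} (ht : 0 ≤ t) :
    ‖expA A t * BC * expA A t‖ ≤ M ^ 2 * ‖BC‖ * Real.exp (-(2 * ε) * t) := by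
  have hE := hdecay t ht
  have hM : 0 ≤ M * Real.exp (-ε * t) := (norm_nonneg _).trans hE
  calc ‖expA A t * BC * expA A t‖ ≤ ‖expA A t‖ * ‖BC‖ * ‖expA A t‖ :=
        (norm_mul_le _ _).trans (by gcongr; exact norm_mul_le _ _)
    _ ≤ (M * Real.exp (-ε * t)) * ‖BC‖ * (M * Real.exp (-ε * t)) := by gcongr
    _ = M ^ 2 * ‖BC‖ * Real.exp (-(2 * ε) * t) := by
        rw [show -(2 * ε) * t = -ε * t + -ε * t by ring, Real.exp_add]; ring

theorem integrableOn_Ioi_expA_mul_mul_expA (hε : 0 < ε)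
    (hdecay : ∀ t : ℝ, 0 ≤ t → ‖expA A t‖ ≤ M * Real.exp (-ε * t)) (c : ℝ) :
    IntegrableOn (fun t => expA A t * BC * expA A t) (Set.Ioi c) := by
  have hcont := continuous_expA_mul_mul_expA A BC
  have hIoi : IntegrableOn (fun t => expA A t * BC * expA A t) (Set.Ioi 0) := by
    refine Integrable.mono'
      ((exp_neg_integrableOn_Ioi 0 (b := 2 * ε) (by positivity)).const_mul (M ^ 2 * ‖BC‖))
      hcont.aestronglyMeasurable ?_
    filter_upwards [ae_restrict_mem measurableSet_Ioi] with t ht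
    simpa [neg_mul, mul_assoc] using norm_expA_mul_mul_expA_le A BC hdecay (le_of_lt ht)
  exact ((hcont.integrableOn_Icc.mono_set Set.Ioc_subset_Icc_self).union hIoi).mono_set
    Set.Ioi_subset_Ioc_union_Ioi

theorem tendsto_expA_mul_mul_expA_atTop (hε : 0 < ε)
    (hdecay : ∀ t : ℝ, 0 ≤ t → ‖expA A t‖ ≤ M * Real.exp (-ε * t)) :
    Tendsto (fun t => expA A t * BC * expA A t) atTop (𝓝 0) := by
  have hexp : Tendsto (fun t => M ^ 2 * ‖BC‖ * Real.exp (-(2 * ε) * t))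
      atTop (𝓝 0) := by
    simpa using (Real.tendsto_exp_atBot.comp
      (tendsto_id.const_mul_atTop_of_neg (by linarith : -(2 * ε) < 0))).const_mul
        (M ^ 2 * ‖BC‖)
  refine squeeze_zero_norm' ?_ hexp
  filter_upwards [eventually_ge_atTop (0 : ℝ)] with t ht
  exact norm_expA_mul_mul_expA_le A BC hdecay ht

theorem mul_Rop_add_Rop_mul (hε : 0 < ε)
    (hdecay : ∀ t : ℝ, 0 ≤ t → ‖expA A t‖ ≤ M * Real.exp (-ε * t)) (x : ℝ) :
    A * Rop A BC x + Rop A BC x * A = expA A x * BC * expA A x := by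
  have hg := integrableOn_Ioi_expA_mul_mul_expA A BC hε hdecay x
  have hAg : IntegrableOn (fun t => A * (expA A t * BC * expA A t)) (Set.Ioi x) :=
    (ContinuousLinearMap.mul ℂ (H →L[ℂ] H) A).integrable_comp hg
  have hgA : IntegrableOn (fun t => expA A t * BC * expA A t * A) (Set.Ioi x) :=
    ((ContinuousLinearMap.mul ℂ (H →L[ℂ] H)).flip A).integrable_comp hg
  have hFTC := integral_Ioi_of_hasDerivAt_of_tendsto
    (continuous_expA_mul_mul_expA A BC).continuousWithinAt
    (fun t _ => hasDerivAt_expA_mul_mul_expA A BC t) (hAg.add hgA).neg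
    (tendsto_expA_mul_mul_expA_atTop A BC hε hdecay)
  rw [integral_neg, integral_add hAg hgA] at hFTC
  have hAR : ∫ t in Set.Ioi x, A * (expA A t * BC * expA A t) = A * Rop A BC x :=
    (ContinuousLinearMap.mul ℂ (H →L[ℂ] H) A).integral_comp_comm hg
  have hRA : ∫ t in Set.Ioi x, expA A t * BC * expA A t * A = Rop A BC x * A :=
    ((ContinuousLinearMap.mul ℂ (H →L[ℂ] H)).flip A).integral_comp_comm hg
  rw [hAR, hRA, zero_sub] at hFTC
  exact neg_injective hFTC

theorem hasDerivAt_Rop (hε : 0 < ε)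
    (hdecay : ∀ t : ℝ, 0 ≤ t → ‖expA A t‖ ≤ M * Real.exp (-ε * t)) (x : ℝ) :
    HasDerivAt (Rop A BC) (-(expA A x * BC * expA A x)) x := by
  have hcont := continuous_expA_mul_mul_expA A BC
  have hRop : Rop A BC = fun y => Rop A BC 0 - ∫ t in (0 : ℝ)..y, expA A t * BC * expA A t := by
    funext y
    rw [eq_sub_iff_add_eq', Rop, Rop, intervalIntegral.integral_interval_add_Ioi
      (integrableOn_Ioi_expA_mul_mul_expA A BC hε hdecay 0)
      (integrableOn_Ioi_expA_mul_mul_expA A BC hε hdecay y)]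
  rw [hRop]
  exact (intervalIntegral.integral_hasDerivAt_right (hcont.intervalIntegrable 0 x)
    (hcont.stronglyMeasurableAtFilter _ _) hcont.continuousAt).const_sub _

theorem hasDerivAt_expA_mul_inverse_one_sub_mul_self_mul_expA {R : ℝ → H →L[ℂ] H}
    {K : H →L[ℂ] H} {x : ℝ} (hR : HasDerivAt R (-K) x) (hK : A * R x + R x * A = K)
    (hp : IsUnit (1 + R x)) (hm : IsUnit (1 - R x)) :
    HasDerivAt (fun y => expA A y * Ring.inverse (1 - R y * R y) * expA A y)
      (-(expA A x * (2 * (Ring.inverse (1 + R x) * A * Ring.inverse (1 + R x))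
        + 2 * (Ring.inverse (1 - R x * R x) * K * Ring.inverse (1 - R x * R x))) * expA A x)) x := by
  have hU : IsUnit (1 - R x * R x) := by
    rw [show 1 - R x * R x = (1 - R x) * (1 + R x) by noncomm_ring]
    exact hm.mul hp
  have hW : HasDerivAt (fun y => 1 - R y * R y) (K * R x + R x * K) x :=
    ((hasDerivAt_const x 1).sub (hR.mul hR)).congr_deriv (by noncomm_ring)
  refine ((hW.ringInverse hU).expA_mul_mul_expA A).congr_deriv ?_
  rw [← riccati_algebraic_identity hK hp hm]
  noncomm_ring

end ExpA

theorem riccati_equation_for_V_general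
    {H : Type*} [NormedAddCommGroup H] [InnerProductSpace ℂ H] [CompleteSpace H]
    (A : H →L[ℂ] H) (b : H) (C : H →L[ℂ] ℂ)
    (M ε : ℝ) (hε : 0 < ε)
    (hdecay : ∀ t : ℝ, 0 ≤ t → ‖expA A t‖ ≤ M * Real.exp (-ε * t))
    (J : Set ℝ)
    (hinvp : ∀ x ∈ J, IsUnit (1 + Rop A (C.smulRight b) x))
    (hinvm : ∀ x ∈ J, IsUnit (1 - Rop A (C.smulRight b) x))
    (V : ℝ → ℂ)
    (hV : ∀ x : ℝ, V x = -(C ((expA A x *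
      Ring.inverse (1 - Rop A (C.smulRight b) x * Rop A (C.smulRight b) x) *
      expA A x) b)))
    (a : ℝ → ℂ)
    (ha : ∀ x : ℝ, a x = C ((expA A x *
      Ring.inverse (1 + Rop A (C.smulRight b) x) * A *
      Ring.inverse (1 + Rop A (C.smulRight b) x) * expA A x) b)) :
    ∀ x ∈ J, HasDerivAt V (2 * a x + 2 * (V x) ^ 2) x := by
  intro x hx
  have hT := hasDerivAt_expA_mul_inverse_one_sub_mul_self_mul_expA A
    (hasDerivAt_Rop A _ hε hdecay x) (mul_Rop_add_Rop_mul A _ hε hdecay x) (hinvp x hx) (hinvm x hx)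
  have hCT := (((C.comp (ContinuousLinearMap.apply ℂ H b)).restrictScalars ℝ).hasFDerivAt
    |>.comp_hasDerivAt x hT).neg
  rw [funext hV, funext ha]
  refine hCT.congr_deriv ?_
  set E := expA A x
  set S := Ring.inverse (1 - Rop A (C.smulRight b) x * Rop A (C.smulRight b) x)
  set P := Ring.inverse (1 + Rop A (C.smulRight b) x)
  have hsplit : E * (2 * (P * A * P) + 2 * (S * (E * C.smulRight b * E) * S)) * E
      = (E * P * A * P * E + E * P * A * P * E)
        + (E * S * E * C.smulRight b * (E * S * E) + E * S * E * C.smulRight b * (E * S * E)) := by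
    noncomm_ring
  simp only [hsplit, ContinuousLinearMap.comp_apply, ContinuousLinearMap.coe_restrictScalars',
    ContinuousLinearMap.apply_apply, map_add, map_neg, neg_neg,
    ContinuousLinearMap.apply_mul_smulRight_mul_apply]
  ring

/-- With the rank-one operator `BC : v ↦ C(v)·b` and `R_x` as above, if both `I + R_x` and
`I − R_x` are invertible for all `x` in an open interval `J`, then
`V(x) = −C(exp(−xA)·(I − R_x²)⁻¹·exp(−xA)·b)` is differentiable on `J` and satisfies the
Riccati-type equation `V′(x) = 2·a(x) + 2·V(x)²`, where
`a(x) = C(exp(−xA)·(I+R_x)⁻¹·A·(I+R_x)⁻¹·exp(−xA)·b)`. -/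
theorem riccati_equation_for_V
    {H : Type*} [NormedAddCommGroup H] [InnerProductSpace ℂ H] [CompleteSpace H]
    (A : H →L[ℂ] H) (b : H) (C : H →L[ℂ] ℂ)
    (M ε : ℝ) (hM : 0 < M) (hε : 0 < ε)
    (hdecay : ∀ t : ℝ, 0 ≤ t → ‖expA A t‖ ≤ M * Real.exp (-ε * t))
    (J : Set ℝ) (hJopen : IsOpen J) (hJsub : J ⊆ Set.Ioi (0 : ℝ))
    (hinvp : ∀ x ∈ J, IsUnit (1 + Rop A (C.smulRight b) x))
    (hinvm : ∀ x ∈ J, IsUnit (1 - Rop A (C.smulRight b) x))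
    (V : ℝ → ℂ)
    (hV : ∀ x : ℝ, V x = -(C ((expA A x *
      Ring.inverse (1 - Rop A (C.smulRight b) x * Rop A (C.smulRight b) x) *
      expA A x) b)))
    (a : ℝ → ℂ)
    (ha : ∀ x : ℝ, a x = C ((expA A x *
      Ring.inverse (1 + Rop A (C.smulRight b) x) * A *
      Ring.inverse (1 + Rop A (C.smulRight b) x) * expA A x) b)) :
    ∀ x ∈ J, HasDerivAt V (2 * a x + 2 * (V x) ^ 2) x :=
  riccati_equation_for_V_general A b C M ε hε hdecay J hinvp hinvm V hV a ha
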